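/- Let S₁, S₂ ⊆ S with S₁ ∩ S₂ = {t}. Let W₁ ∈ Λ(S₁) be even or odd, and let W₂ ∈ Λ(S₂). Let β, γ ∈ ℂ, let a = Σ_{s ∈ S₁, s ≠ t} (β_s ∂_s + γ_s x_s) and b = Σ_{s ∈ S₂, s ≠ t} (β'_s ∂_s + γ'_s x_s) for some complex coefficients. Suppose (a + β ∂_t + γ x_t) W₁ = 0 and (b + β ∂_t − γ x_t) W₂ = 0. Then (a + b)(W₁ W₂) = −β · ∂_t(W₁ W₂). -/

import Mathlib

noncomputable section

/-- The Grassmann (exterior) algebra `Λ(ℂ^S)` on generators indexed by `S`. -/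
abbrev GS (S : Type) [Fintype S] [DecidableEq S] := ExteriorAlgebra ℂ (S → ℂ)

/-- `x_s` : left exterior multiplication by the generator `e_s`. -/
def XopS (S : Type) [Fintype S] [DecidableEq S] (s : S) : GS S →ₗ[ℂ] GS S :=
  LinearMap.mulLeft ℂ (ExteriorAlgebra.ι ℂ (Pi.single s 1))

/-- `∂_s` : left interior multiplication (contraction) with the dual basis vector of `e_s`. -/
def DopS (S : Type) [Fintype S] [DecidableEq S] (s : S) : GS S →ₗ[ℂ] GS S :=
  CliffordAlgebra.contractLeft (LinearMap.proj s)

/-- `Λ(T)` : the subalgebra of `Λ(ℂ^S)` generated by the `e_s` with `s ∈ T`. -/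
def GSub (S : Type) [Fintype S] [DecidableEq S] (T : Finset S) : Subalgebra ℂ (GS S) :=
  Algebra.adjoin ℂ ((fun s => ExteriorAlgebra.ι ℂ (Pi.single s 1)) '' ↑T)

/-- An element of `Λ(ℂ^S)` is even or odd, i.e. a sum of monomials of even degree or
a sum of monomials of odd degree. -/
def IsEvenOrOdd (S : Type) [Fintype S] [DecidableEq S] (w : GS S) : Prop :=
  w ∈ CliffordAlgebra.evenOdd (0 : QuadraticForm ℂ (S → ℂ)) 0 ∨
  w ∈ CliffordAlgebra.evenOdd (0 : QuadraticForm ℂ (S → ℂ)) 1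

/-!
Left contraction obeys the twisted Leibniz rule `∂(xy) = ∂x·y + x̂·∂y`, where `x̂` is the grade
involution, and a generator moves past any `x` as `e·x = x̂·e`. Hence an operator built from
variables outside `Λ(S₂)` acts on `W₁W₂` through `W₁` alone, and one built from variables outside
`Λ(S₁)` acts through `W₂` alone, with `W₁` replaced by `Ŵ₁`. Rewriting `aW₁` and `bW₂` by the two
annihilation equations, the `γ`-terms cancel because `x_t(W₁W₂) = Ŵ₁·x_tW₂`, and the `β`-terms
recombine by the Leibniz rule into `-β ∂_t(W₁W₂)`.
-/

namespace CliffordAlgebra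

variable {R M : Type*} [CommRing R] [AddCommGroup M] [Module R M] {Q : QuadraticForm R M}

theorem contractLeft_mul (d : Module.Dual R M) (x y : CliffordAlgebra Q) :
    contractLeft d (x * y) = contractLeft d x * y + involute x * contractLeft d y := by
  induction x using CliffordAlgebra.induction generalizing y with
  | algebraMap r =>
    rw [contractLeft_algebraMap_mul, contractLeft_algebraMap, zero_mul, zero_add,
      AlgHom.commutes]
  | ι m =>
    rw [contractLeft_ι_mul, contractLeft_ι, involute_ι, Algebra.smul_def, sub_eq_add_neg,
      neg_mul]
  | mul x₁ x₂ ih₁ ih₂ =>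
    rw [mul_assoc, ih₁, ih₂ y, ih₁ x₂, map_mul]
    noncomm_ring
  | add x₁ x₂ ih₁ ih₂ =>
    rw [add_mul, map_add, map_add, map_add, ih₁, ih₂]
    noncomm_ring

theorem contractLeft_eq_zero_of_mem_adjoin {d : Module.Dual R M} {s : Set M}
    (hs : ∀ m ∈ s, d m = 0) {x : CliffordAlgebra Q} (hx : x ∈ Algebra.adjoin R (ι Q '' s)) :
    contractLeft d x = 0 := by
  induction hx using Algebra.adjoin_induction with
  | mem x hx =>
    obtain ⟨m, hm, rfl⟩ := hx
    rw [contractLeft_ι, hs m hm, map_zero]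
  | algebraMap r => exact contractLeft_algebraMap Q d r
  | add x y _ _ hx hy => rw [map_add, hx, hy, add_zero]
  | mul x y _ _ hx hy => rw [contractLeft_mul, hx, hy, zero_mul, mul_zero, add_zero]

end CliffordAlgebra

namespace ExteriorAlgebra

open CliffordAlgebra

variable {R M : Type*} [CommRing R] [AddCommGroup M] [Module R M]

theorem ι_mul_eq_involute_mul (v : M) (x : ExteriorAlgebra R M) :
    ι R v * x = involute x * ι R v := by
  induction x using CliffordAlgebra.induction with
  | algebraMap r => rw [AlgHom.commutes]; exact (Algebra.commutes r _).symm
  | ι m => rw [eq_neg_of_add_eq_zero_left (ι_add_mul_swap v m), involute_ι, neg_mul]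
  | mul x₁ x₂ ih₁ ih₂ => rw [← mul_assoc, ih₁, mul_assoc, ih₂, map_mul, ← mul_assoc]
  | add x₁ x₂ ih₁ ih₂ => rw [mul_add, ih₁, ih₂, map_add, add_mul]

end ExteriorAlgebra

theorem Finset.notMem_of_mem_erase_of_inter_eq_singleton {α : Type*} [DecidableEq α]
    {s t : Finset α} {a b : α} (h : s ∩ t = {a}) (hb : b ∈ s.erase a) : b ∉ t := fun hbt =>
  Finset.ne_of_mem_erase hb <|
    Finset.mem_singleton.mp (h ▸ Finset.mem_inter.mpr ⟨Finset.mem_of_mem_erase hb, hbt⟩)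

section GrassmannOperators

open CliffordAlgebra

variable {S : Type} [Fintype S] [DecidableEq S]

theorem DopS_mul (s : S) (x y : GS S) :
    DopS S s (x * y) = DopS S s x * y + involute x * DopS S s y :=
  contractLeft_mul _ x y

theorem XopS_mul (s : S) (x y : GS S) : XopS S s (x * y) = XopS S s x * y :=
  (mul_assoc _ _ _).symm

theorem XopS_mul_eq_involute_mul (s : S) (x y : GS S) :
    XopS S s x * y = involute x * XopS S s y := by
  simp only [XopS, LinearMap.mulLeft_apply]
  rw [ExteriorAlgebra.ι_mul_eq_involute_mul, mul_assoc]

theorem DopS_eq_zero_of_mem_GSub {T : Finset S} {s : S} (hs : s ∉ T) {w : GS S}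
    (hw : w ∈ GSub S T) : DopS S s w = 0 := by
  rw [GSub, ← Set.image_image (ExteriorAlgebra.ι ℂ) (fun r => Pi.single r 1)] at hw
  refine contractLeft_eq_zero_of_mem_adjoin ?_ hw
  rintro _ ⟨r, hr, rfl⟩
  have hrs : r ≠ s := fun h => hs (h ▸ hr)
  simp [hrs]

theorem sum_DopS_XopS_mul_of_DopS_eq_zero_right {T : Finset S} (β γ : S → ℂ) (x : GS S)
    {y : GS S} (hy : ∀ s ∈ T, DopS S s y = 0) :
    (∑ s ∈ T, (β s • DopS S s + γ s • XopS S s)) (x * y) =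
      (∑ s ∈ T, (β s • DopS S s + γ s • XopS S s)) x * y := by
  simp only [LinearMap.sum_apply, Finset.sum_mul]
  refine Finset.sum_congr rfl fun s hs => ?_
  simp only [LinearMap.add_apply, LinearMap.smul_apply, DopS_mul, hy s hs, XopS_mul,
    mul_zero, add_zero, add_mul, smul_mul_assoc]

theorem sum_DopS_XopS_mul_of_DopS_eq_zero_left {T : Finset S} (β γ : S → ℂ) {x : GS S}
    (hx : ∀ s ∈ T, DopS S s x = 0) (y : GS S) :
    (∑ s ∈ T, (β s • DopS S s + γ s • XopS S s)) (x * y) =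
      involute x * (∑ s ∈ T, (β s • DopS S s + γ s • XopS S s)) y := by
  simp only [LinearMap.sum_apply, Finset.mul_sum]
  refine Finset.sum_congr rfl fun s hs => ?_
  simp only [LinearMap.add_apply, LinearMap.smul_apply, DopS_mul, hx s hs, XopS_mul,
    XopS_mul_eq_involute_mul, zero_mul, zero_add, mul_add, mul_smul_comm]

end GrassmannOperators

theorem composed_operator_on_product_general
    (S : Type) [Fintype S] [DecidableEq S]
    (S₁ S₂ : Finset S) (t : S) (hint : S₁ ∩ S₂ = {t})
    (W₁ W₂ : GS S) (hW₁ : W₁ ∈ GSub S S₁) (hW₂ : W₂ ∈ GSub S S₂)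
    (βc γc βc' γc' : S → ℂ) (β γ : ℂ)
    (a b : GS S →ₗ[ℂ] GS S)
    (ha : a = ∑ s ∈ S₁.erase t, (βc s • DopS S s + γc s • XopS S s))
    (hb : b = ∑ s ∈ S₂.erase t, (βc' s • DopS S s + γc' s • XopS S s))
    (h₁ : (a + β • DopS S t + γ • XopS S t) W₁ = 0)
    (h₂ : (b + β • DopS S t - γ • XopS S t) W₂ = 0) :
    (a + b) (W₁ * W₂) = -(β • DopS S t (W₁ * W₂)) := by
  have hint' : S₂ ∩ S₁ = {t} := by rwa [Finset.inter_comm]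
  have haW : a (W₁ * W₂) = a W₁ * W₂ := by
    subst ha
    exact sum_DopS_XopS_mul_of_DopS_eq_zero_right βc γc W₁ fun s hs =>
      DopS_eq_zero_of_mem_GSub (Finset.notMem_of_mem_erase_of_inter_eq_singleton hint hs) hW₂
  have hbW : b (W₁ * W₂) = CliffordAlgebra.involute W₁ * b W₂ := by
    subst hb
    refine sum_DopS_XopS_mul_of_DopS_eq_zero_left βc' γc' (fun s hs => ?_) W₂
    exact DopS_eq_zero_of_mem_GSub (Finset.notMem_of_mem_erase_of_inter_eq_singleton hint' hs) hW₁
  have haW₁ : a W₁ = -(β • DopS S t W₁) - γ • XopS S t W₁ := by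
    simp only [LinearMap.add_apply, LinearMap.smul_apply] at h₁
    linear_combination (norm := module) h₁
  have hbW₂ : b W₂ = -(β • DopS S t W₂) + γ • XopS S t W₂ := by
    simp only [LinearMap.sub_apply, LinearMap.add_apply, LinearMap.smul_apply] at h₂
    linear_combination (norm := module) h₂
  rw [LinearMap.add_apply, haW, hbW, haW₁, hbW₂, DopS_mul]
  simp only [sub_mul, neg_mul, smul_mul_assoc, mul_add, mul_neg, mul_smul_comm,
    XopS_mul_eq_involute_mul]
  module

/-- composition of two operators annihilating weights sharing exactly one
variable `x_t`: the composed operator `a + b` applied to `W₁W₂` gives `−β ∂_t(W₁W₂)`. -/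
theorem composed_operator_on_product
    (S : Type) [Fintype S] [DecidableEq S]
    (S₁ S₂ : Finset S) (t : S) (hint : S₁ ∩ S₂ = {t})
    (W₁ W₂ : GS S) (hW₁ : W₁ ∈ GSub S S₁) (hW₂ : W₂ ∈ GSub S S₂)
    (hpar : IsEvenOrOdd S W₁)
    (βc γc βc' γc' : S → ℂ) (β γ : ℂ)
    (a b : GS S →ₗ[ℂ] GS S)
    (ha : a = ∑ s ∈ S₁.erase t, (βc s • DopS S s + γc s • XopS S s))
    (hb : b = ∑ s ∈ S₂.erase t, (βc' s • DopS S s + γc' s • XopS S s))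
    (h₁ : (a + β • DopS S t + γ • XopS S t) W₁ = 0)
    (h₂ : (b + β • DopS S t - γ • XopS S t) W₂ = 0) :
    (a + b) (W₁ * W₂) = -(β • DopS S t (W₁ * W₂)) :=
  composed_operator_on_product_general S S₁ S₂ t hint W₁ W₂ hW₁ hW₂ βc γc βc' γc' β γ a b ha hb h₁
    h₂
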